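/- Let G be the presented group on generators α, α′, β, β′, γ, γ′ with the relations R₈ together with the additional relations α = α′ = β = β′. Then G is abelian. -/

import Mathlib

/-- The relations of the reduced braid group `B̄₃`:
`σ₁σ₂σ₁ = σ₂σ₁σ₂` and `(σ₁σ₂)³ = 1`. -/
def bbar3Rels : Set (FreeGroup (Fin 2)) :=
  { FreeGroup.of 0 * FreeGroup.of 1 * FreeGroup.of 0 *
      (FreeGroup.of 1 * FreeGroup.of 0 * FreeGroup.of 1)⁻¹,
    (FreeGroup.of 0 * FreeGroup.of 1) ^ 3 }

/-- The reduced braid group `B̄₃ = ⟨σ₁, σ₂ ∣ σ₁σ₂σ₁ = σ₂σ₁σ₂, (σ₁σ₂)³ = 1⟩`. -/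
abbrev Bbar3 : Type := PresentedGroup bbar3Rels

/-- The generator `σ₁` of `B̄₃`. -/
def σ1 : Bbar3 := PresentedGroup.of 0

/-- The generator `σ₂` of `B̄₃`. -/
def σ2 : Bbar3 := PresentedGroup.of 1

namespace Stmt

def a : FreeGroup (Fin 6) := FreeGroup.of 0
def a' : FreeGroup (Fin 6) := FreeGroup.of 1
def b : FreeGroup (Fin 6) := FreeGroup.of 2
def b' : FreeGroup (Fin 6) := FreeGroup.of 3
def c : FreeGroup (Fin 6) := FreeGroup.of 4
def c' : FreeGroup (Fin 6) := FreeGroup.of 5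

/-- The set of relators. -/
def rels : Set (FreeGroup (Fin 6)) :=
  { b' * c * (c * b)⁻¹,
    c * b * (c' * b')⁻¹,
    c' * b' * (b * c')⁻¹,
    a * b * (a' * b')⁻¹,
    (a * b) ^ 3 * (b' * a' * b' * a * b * a)⁻¹,
    (a * b) ^ 3 * (b * a * b * a' * b' * a')⁻¹,
    (b * a)⁻¹ * a * (b * a) * c⁻¹,
    (b' * a')⁻¹ * a' * (b' * a') * c'⁻¹,
    c * a * b * c' * a' * b',
    a * a'⁻¹,
    a' * b⁻¹,
    b * b'⁻¹ }

end Stmt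

namespace Stmt14Aux

open Stmt

def π : FreeGroup (Fin 6) →* PresentedGroup Stmt.rels := QuotientGroup.mk' _

lemma π_rel {r : FreeGroup (Fin 6)} (h : r ∈ Stmt.rels) : π r = 1 :=
  (QuotientGroup.eq_one_iff r).2 (Subgroup.subset_normalClosure h)

lemma haa' : π a = π a' := by
  have := π_rel (r := a * a'⁻¹) (by simp [rels])
  simp only [map_mul, map_inv] at this
  rw [mul_inv_eq_one] at this; exact this

lemma ha'b : π a' = π b := by
  have := π_rel (r := a' * b⁻¹) (by simp [rels])
  simp only [map_mul, map_inv] at this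
  rw [mul_inv_eq_one] at this; exact this

lemma hbb' : π b = π b' := by
  have := π_rel (r := b * b'⁻¹) (by simp [rels])
  simp only [map_mul, map_inv] at this
  rw [mul_inv_eq_one] at this; exact this

lemma hc : π c = π a := by
  have := π_rel (r := (b * a)⁻¹ * a * (b * a) * c⁻¹) (by simp [rels])
  simp only [map_mul, map_inv] at this
  rw [mul_inv_eq_one] at this
  have hb : π b = π a := (haa'.trans ha'b).symm
  rw [← this, hb]; group

lemma hc' : π c' = π a := by
  have := π_rel (r := (b' * a')⁻¹ * a' * (b' * a') * c'⁻¹) (by simp [rels])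
  simp only [map_mul, map_inv] at this
  rw [mul_inv_eq_one] at this
  have hb : π b' = π a' := (ha'b.trans hbb').symm
  rw [← this, hb, ← haa']; group

lemma gen_eq (i : Fin 6) : π (FreeGroup.of i) = π a := by
  fin_cases i
  · rfl
  · exact haa'.symm
  · exact (haa'.trans ha'b).symm
  · exact (haa'.trans (ha'b.trans hbb')).symm
  · exact hc
  · exact hc'

lemma mem_zpowers (x : PresentedGroup Stmt.rels) : x ∈ Subgroup.zpowers (π a) := by
  obtain ⟨w, rfl⟩ := QuotientGroup.mk'_surjective (Subgroup.normalClosure Stmt.rels) x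
  show π w ∈ _
  induction w using FreeGroup.induction_on with
  | C1 => exact one_mem _
  | of i => show π (FreeGroup.of i) ∈ _; rw [gen_eq]; exact Subgroup.mem_zpowers _
  | inv_of i h => rw [map_inv]; exact inv_mem h
  | mul x y hx hy => rw [map_mul]; exact mul_mem hx hy

end Stmt14Aux

/-- Adding the relations `α = α' = β = β'` to the relations R₈, the resulting group
is abelian. -/
theorem stmt14 : ∀ x y : PresentedGroup Stmt.rels, x * y = y * x := by
  intro x y
  obtain ⟨m, hm⟩ := Stmt14Aux.mem_zpowers x
  obtain ⟨n, hn⟩ := Stmt14Aux.mem_zpowers y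
  rw [← hm, ← hn, ← zpow_add, ← zpow_add, add_comm]
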